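/- arXiv:2211.14141 — 4 statements merged into one kernel-verified Lean document; each statement's English description precedes it below -/
import Mathlib

section
/- With ρ(a,b) = inf{μ(α,β) : α ∈ a, β ∈ b} on πₙ(X,x₀), left and right translations are isometries: ρ(a,b) = ρ(ac, bc) = ρ(ca, cb) for all a, b, c ∈ πₙ(X,x₀). -/
open scoped Topology unitInterval

/-- The natural pseudometric on the n-th homotopy group of a based metric space:
ρ(a,b) = inf{ μ(α,β) : α ∈ a, β ∈ b }, where μ is the uniform (sup) metric on n-loops. -/
noncomputable def homotopyRho {N : Type*} {X : Type*} [MetricSpace X] (x₀ : X)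
    (a b : HomotopyGroup N X x₀) : ℝ :=
  sInf {r : ℝ | ∃ α β : GenLoop N X x₀,
    (⟦α⟧ : HomotopyGroup N X x₀) = a ∧ (⟦β⟧ : HomotopyGroup N X x₀) = b ∧ r = dist α β}

section aux

variable {N X : Type*} [DecidableEq N] [MetricSpace X] {x : X}

lemma dist_transAt_left (i : N) (f g h : GenLoop N X x) :
    dist (GenLoop.transAt i f h) (GenLoop.transAt i g h) ≤ dist f g := by
  rw [Subtype.dist_eq, Subtype.dist_eq, ContinuousMap.dist_le dist_nonneg]
  intro t
  have h1 : ∀ u, dist (f u) (g u) ≤ dist (f : C(I^N, X)) (g : C(I^N, X)) := fun u =>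
    ContinuousMap.dist_apply_le_dist u
  show dist ((GenLoop.transAt i f h) t) ((GenLoop.transAt i g h) t) ≤ _
  simp only [GenLoop.transAt, GenLoop.coe_copy]
  split_ifs
  · exact h1 _
  · rw [dist_self]; exact dist_nonneg

lemma dist_transAt_right (i : N) (f g h : GenLoop N X x) :
    dist (GenLoop.transAt i h f) (GenLoop.transAt i h g) ≤ dist f g := by
  rw [Subtype.dist_eq, Subtype.dist_eq, ContinuousMap.dist_le dist_nonneg]
  intro t
  have h1 : ∀ u, dist (f u) (g u) ≤ dist (f : C(I^N, X)) (g : C(I^N, X)) := fun u =>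
    ContinuousMap.dist_apply_le_dist u
  show dist ((GenLoop.transAt i h f) t) ((GenLoop.transAt i h g) t) ≤ _
  simp only [GenLoop.transAt, GenLoop.coe_copy]
  split_ifs
  · rw [dist_self]; exact dist_nonneg
  · exact h1 _

end aux

section main

variable {X : Type*} [MetricSpace X] {x₀ : X} {n : ℕ}

private def S (a b : HomotopyGroup (Fin (n + 1)) X x₀) : Set ℝ :=
  {r : ℝ | ∃ α β : GenLoop (Fin (n + 1)) X x₀,
    (⟦α⟧ : HomotopyGroup (Fin (n + 1)) X x₀) = a ∧
    (⟦β⟧ : HomotopyGroup (Fin (n + 1)) X x₀) = b ∧ r = dist α β}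

lemma S_nonempty (a b : HomotopyGroup (Fin (n + 1)) X x₀) : (S a b).Nonempty := by
  obtain ⟨α, hα⟩ := Quotient.exists_rep a
  obtain ⟨β, hβ⟩ := Quotient.exists_rep b
  exact ⟨dist α β, α, β, hα, hβ, rfl⟩

lemma S_bdd (a b : HomotopyGroup (Fin (n + 1)) X x₀) : BddBelow (S a b) := by
  refine ⟨0, fun r hr => ?_⟩
  obtain ⟨α, β, _, _, rfl⟩ := hr
  exact dist_nonneg

lemma rho_mul_right_le (a b c : HomotopyGroup (Fin (n + 1)) X x₀) :
    homotopyRho x₀ (a * c) (b * c) ≤ homotopyRho x₀ a b := by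
  obtain ⟨γ, hγ⟩ := Quotient.exists_rep c
  refine le_csInf (S_nonempty a b) (fun r hr => ?_)
  obtain ⟨α, β, hα, hβ, rfl⟩ := hr
  refine csInf_le_of_le (S_bdd (a * c) (b * c))
    ⟨GenLoop.transAt 0 γ α, GenLoop.transAt 0 γ β, ?_, ?_, rfl⟩
    (dist_transAt_right 0 α β γ)
  · rw [← hα, ← hγ, ← HomotopyGroup.mul_spec]
  · rw [← hβ, ← hγ, ← HomotopyGroup.mul_spec]

lemma rho_mul_left_le (a b c : HomotopyGroup (Fin (n + 1)) X x₀) :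
    homotopyRho x₀ (c * a) (c * b) ≤ homotopyRho x₀ a b := by
  obtain ⟨γ, hγ⟩ := Quotient.exists_rep c
  refine le_csInf (S_nonempty a b) (fun r hr => ?_)
  obtain ⟨α, β, hα, hβ, rfl⟩ := hr
  refine csInf_le_of_le (S_bdd (c * a) (c * b))
    ⟨GenLoop.transAt 0 α γ, GenLoop.transAt 0 β γ, ?_, ?_, rfl⟩
    (dist_transAt_left 0 α β γ)
  · rw [← hα, ← hγ, ← HomotopyGroup.mul_spec]
  · rw [← hβ, ← hγ, ← HomotopyGroup.mul_spec]

end main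

/-- Left and right translations are ρ-isometries:
ρ(a,b) = ρ(ac,bc) = ρ(ca,cb). -/
theorem stmt3 {X : Type*} [MetricSpace X] (x₀ : X) (n : ℕ)
    (a b c : HomotopyGroup (Fin (n + 1)) X x₀) :
    homotopyRho x₀ a b = homotopyRho x₀ (a * c) (b * c) ∧
      homotopyRho x₀ a b = homotopyRho x₀ (c * a) (c * b) := by
  constructor
  · refine le_antisymm ?_ (rho_mul_right_le a b c)
    have := rho_mul_right_le (a * c) (b * c) c⁻¹
    simpa using this
  · refine le_antisymm ?_ (rho_mul_left_le a b c)
    have := rho_mul_left_le (c * a) (c * b) c⁻¹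
    simpa using this
end

section
/- The function ρ(a,b) = inf{μ(α,β) : α ∈ a, β ∈ b} on πₙ(X,x₀) satisfies the triangle inequality, and hence is a pseudometric on πₙ(X,x₀). -/
open scoped Topology unitInterval

section aux
open GenLoop
variable {N X : Type*} [DecidableEq N] [MetricSpace X] {x : X}

theorem dist_transAt_le (i : N) (f g f' g' : GenLoop N X x) :
    dist (transAt i f g) (transAt i f' g') ≤ max (dist f f') (dist g g') := by
  rw [Subtype.dist_eq, ContinuousMap.dist_le (le_max_of_le_left dist_nonneg)]
  intro t
  show dist (transAt i f g t) (transAt i f' g' t) ≤ _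
  simp only [transAt, coe_copy]
  split_ifs
  · exact le_max_of_le_left
      ((ContinuousMap.dist_apply_le_dist _).trans_eq (Subtype.dist_eq f f').symm)
  · exact le_max_of_le_right
      ((ContinuousMap.dist_apply_le_dist _).trans_eq (Subtype.dist_eq g g').symm)

theorem dist_symmAt_le (i : N) (f g : GenLoop N X x) :
    dist (symmAt i f) (symmAt i g) ≤ dist f g := by
  rw [Subtype.dist_eq, ContinuousMap.dist_le dist_nonneg]
  intro t
  show dist (symmAt i f t) (symmAt i g t) ≤ _
  simp only [symmAt, coe_copy]
  exact (ContinuousMap.dist_apply_le_dist _).trans_eq (Subtype.dist_eq f g).symm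

variable [Nonempty N]

theorem mk_transAt (i : N) (p q : GenLoop N X x) :
    (⟦transAt i p q⟧ : HomotopyGroup N X x)
      = ((· * ·) : HomotopyGroup N X x → HomotopyGroup N X x → HomotopyGroup N X x) ⟦q⟧ ⟦p⟧ :=
  (HomotopyGroup.mul_spec (i := i) (p := q) (q := p)).symm

theorem mk_symmAt (i : N) (p : GenLoop N X x) :
    (⟦symmAt i p⟧ : HomotopyGroup N X x)
      = ((·⁻¹) : HomotopyGroup N X x → HomotopyGroup N X x) ⟦p⟧ :=
  (HomotopyGroup.inv_spec (i := i)).symm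

/-- Key step: ρ(a,c) ≤ r + s whenever r, s come from representative pairs for (a,b), (b,c). -/
theorem homotopyRho_le_add (x₀ : X) (a b c : HomotopyGroup N X x₀)
    (α β β' γ : GenLoop N X x₀)
    (hα : (⟦α⟧ : HomotopyGroup N X x₀) = a) (hβ : (⟦β⟧ : HomotopyGroup N X x₀) = b)
    (hβ' : (⟦β'⟧ : HomotopyGroup N X x₀) = b) (hγ : (⟦γ⟧ : HomotopyGroup N X x₀) = c) :
    homotopyRho x₀ a c ≤ dist α β + dist β' γ := by
  classical
  obtain i := Classical.arbitrary N
  set A := transAt i β' (transAt i (symmAt i β) α) with hA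
  set C := transAt i γ (transAt i (symmAt i β) β) with hC
  have hAa : (⟦A⟧ : HomotopyGroup N X x₀) = a := by
    rw [hA, mk_transAt i β' (transAt i (symmAt i β) α), mk_transAt i (symmAt i β) α,
      mk_symmAt i β, hα, hβ, hβ']
    show a * b⁻¹ * b = a
    exact inv_mul_cancel_right a b
  have hCc : (⟦C⟧ : HomotopyGroup N X x₀) = c := by
    rw [hC, mk_transAt i γ (transAt i (symmAt i β) β), mk_transAt i (symmAt i β) β,
      mk_symmAt i β, hβ, hγ]
    show b * b⁻¹ * c = c
    rw [mul_inv_cancel, one_mul]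
  have hdist : dist A C ≤ dist α β + dist β' γ := by
    have h1 := dist_transAt_le i β' (transAt i (symmAt i β) α) γ (transAt i (symmAt i β) β)
    have h2 := dist_transAt_le i (symmAt i β) α (symmAt i β) β
    have h3 : dist (symmAt i β) (symmAt i β) = (0 : ℝ) := dist_self _
    have hd1 : (0:ℝ) ≤ dist β' γ := dist_nonneg
    have hd2 : (0:ℝ) ≤ dist α β := dist_nonneg
    calc dist A C ≤ max (dist β' γ) (dist (transAt i (symmAt i β) α) (transAt i (symmAt i β) β)) :=
          h1
      _ ≤ max (dist β' γ) (max (0 : ℝ) (dist α β)) :=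
          max_le_max le_rfl (h2.trans (max_le_max h3.le le_rfl))
      _ ≤ dist α β + dist β' γ := by
          rw [max_eq_right hd2]
          exact max_le (le_add_of_nonneg_left hd2) (le_add_of_nonneg_right hd1)
  refine le_trans (csInf_le ?_ ⟨A, C, hAa, hCc, rfl⟩) hdist
  exact ⟨0, fun r ⟨_, _, _, _, hr⟩ => hr ▸ dist_nonneg⟩

end aux

/-- ρ satisfies the triangle inequality and hence is a pseudometric
on πₙ(X,x₀): it is nonnegative, reflexive, symmetric, and subadditive. -/
theorem stmt5 {X : Type*} [MetricSpace X] (x₀ : X) (n : ℕ) :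
    (∀ a b c : HomotopyGroup (Fin (n + 1)) X x₀,
        homotopyRho x₀ a c ≤ homotopyRho x₀ a b + homotopyRho x₀ b c) ∧
      (∀ a b : HomotopyGroup (Fin (n + 1)) X x₀, homotopyRho x₀ a b = homotopyRho x₀ b a) ∧
      (∀ a : HomotopyGroup (Fin (n + 1)) X x₀, homotopyRho x₀ a a = 0) ∧
      (∀ a b : HomotopyGroup (Fin (n + 1)) X x₀, 0 ≤ homotopyRho x₀ a b) := by
  have hbdd : ∀ a b : HomotopyGroup (Fin (n + 1)) X x₀,
      BddBelow {r : ℝ | ∃ α β : GenLoop (Fin (n + 1)) X x₀,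
        (⟦α⟧ : HomotopyGroup (Fin (n + 1)) X x₀) = a ∧
        (⟦β⟧ : HomotopyGroup (Fin (n + 1)) X x₀) = b ∧ r = dist α β} :=
    fun a b => ⟨0, fun r ⟨_, _, _, _, hr⟩ => hr ▸ dist_nonneg⟩
  have hne : ∀ a b : HomotopyGroup (Fin (n + 1)) X x₀,
      {r : ℝ | ∃ α β : GenLoop (Fin (n + 1)) X x₀,
        (⟦α⟧ : HomotopyGroup (Fin (n + 1)) X x₀) = a ∧
        (⟦β⟧ : HomotopyGroup (Fin (n + 1)) X x₀) = b ∧ r = dist α β}.Nonempty := by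
    intro a b
    obtain ⟨α, hα⟩ := Quotient.exists_rep a
    obtain ⟨β, hβ⟩ := Quotient.exists_rep b
    exact ⟨dist α β, α, β, hα, hβ, rfl⟩
  have hnonneg : ∀ a b : HomotopyGroup (Fin (n + 1)) X x₀, 0 ≤ homotopyRho x₀ a b := by
    intro a b
    exact le_csInf (hne a b) fun r ⟨_, _, _, _, hr⟩ => hr ▸ dist_nonneg
  refine ⟨?_, ?_, ?_, hnonneg⟩
  · intro a b c
    rw [homotopyRho, homotopyRho, ← sub_le_iff_le_add']
    refine le_csInf (hne b c) fun s ⟨β', γ, hβ', hγ, hs⟩ => ?_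
    rw [sub_le_iff_le_add, ← sub_le_iff_le_add']
    refine le_csInf (hne a b) fun r ⟨α, β, hα, hβ, hr⟩ => ?_
    rw [sub_le_iff_le_add']
    subst hr hs
    show homotopyRho x₀ a c ≤ dist β' γ + dist α β
    linarith [homotopyRho_le_add x₀ a b c α β β' γ hα hβ hβ' hγ]
  · intro a b
    unfold homotopyRho
    congr 1
    ext r
    constructor
    · rintro ⟨α, β, hα, hβ, hr⟩; exact ⟨β, α, hβ, hα, hr.trans (dist_comm α β)⟩
    · rintro ⟨β, α, hβ, hα, hr⟩; exact ⟨α, β, hα, hβ, hr.trans (dist_comm β α)⟩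
  · intro a
    refine le_antisymm ?_ (hnonneg a a)
    obtain ⟨α, hα⟩ := Quotient.exists_rep a
    exact csInf_le (hbdd a a) ⟨α, α, hα, hα, (dist_self α).symm⟩
end

section
/- If f : (X,d) → (Y,d') is a uniformly continuous map between metric spaces with f(x₀) = y₀, then the induced homomorphism f_# : πₙ(X,x₀) → πₙ(Y,y₀) is uniformly continuous with respect to the pseudometrics ρ and ρ' induced by d and d' respectively. -/
open scoped Topology unitInterval

/-- If f : (X,d) → (Y,d') is uniformly continuous with f(x₀) = y₀, then the
induced homomorphism f_# : πₙ(X,x₀) → πₙ(Y,y₀), [α] ↦ [f ∘ α], is uniformly continuous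
with respect to the pseudometrics ρ and ρ'. -/
theorem stmt8 {X Y : Type*} [MetricSpace X] [MetricSpace Y] (x₀ : X) (y₀ : Y) (n : ℕ)
    (f : C(X, Y)) (hf₀ : f x₀ = y₀) (hf : UniformContinuous f)
    (F : HomotopyGroup (Fin n) X x₀ → HomotopyGroup (Fin n) Y y₀)
    (hF : ∀ (α : GenLoop (Fin n) X x₀) (β : GenLoop (Fin n) Y y₀),
      (∀ t : Fin n → I, β.1 t = f (α.1 t)) →
        F (⟦α⟧ : HomotopyGroup (Fin n) X x₀) = (⟦β⟧ : HomotopyGroup (Fin n) Y y₀)) :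
    ∀ ε : ℝ, 0 < ε → ∃ δ : ℝ, 0 < δ ∧ ∀ a b : HomotopyGroup (Fin n) X x₀,
      homotopyRho x₀ a b < δ → homotopyRho y₀ (F a) (F b) < ε := by
  intro ε hε
  obtain ⟨δ, hδ, hδε⟩ := Metric.uniformContinuous_iff.mp hf ε hε
  refine ⟨δ, hδ, fun a b hab => ?_⟩
  -- extract representatives with dist < δ
  have hne : {r : ℝ | ∃ α β : GenLoop (Fin n) X x₀,
      (⟦α⟧ : HomotopyGroup (Fin n) X x₀) = a ∧ (⟦β⟧ : HomotopyGroup (Fin n) X x₀) = b ∧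
      r = dist α β}.Nonempty := by
    obtain ⟨α, hα⟩ := Quotient.exists_rep a
    obtain ⟨β, hβ⟩ := Quotient.exists_rep b
    exact ⟨dist α β, α, β, hα, hβ, rfl⟩
  obtain ⟨r, ⟨α, β, hα, hβ, hr⟩, hrδ⟩ := exists_lt_of_csInf_lt hne hab
  subst hr
  -- push forward loops
  have hmk : ∀ γ : GenLoop (Fin n) X x₀, (f.comp γ.1 : C((Fin n → I), Y)) ∈
      GenLoop (Fin n) Y y₀ := fun γ t ht => by
    simp only [ContinuousMap.comp_apply]
    rw [γ.2 t ht, hf₀]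
  set fα : GenLoop (Fin n) Y y₀ := ⟨f.comp α.1, hmk α⟩ with hfα
  set fβ : GenLoop (Fin n) Y y₀ := ⟨f.comp β.1, hmk β⟩ with hfβ
  have hFa : F a = ⟦fα⟧ := by rw [← hα]; exact hF α fα fun t => rfl
  have hFb : F b = ⟦fβ⟧ := by rw [← hβ]; exact hF β fβ fun t => rfl
  have hdist : dist fα fβ < ε := by
    rw [Subtype.dist_eq]
    rw [ContinuousMap.dist_lt_iff hε]
    intro x
    have : (fα.1 : (Fin n → I) → Y) x = f (α.1 x) := rfl
    rw [this]
    have : (fβ.1 : (Fin n → I) → Y) x = f (β.1 x) := rfl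
    rw [this]
    apply hδε
    calc dist (α.1 x) (β.1 x) ≤ dist α.1 β.1 := ContinuousMap.dist_apply_le_dist x
      _ = dist α β := (Subtype.dist_eq α β).symm
      _ < δ := hrδ
  calc homotopyRho y₀ (F a) (F b) ≤ dist fα fβ := by
        apply csInf_le
        · refine ⟨0, fun r hr => ?_⟩
          obtain ⟨_, _, _, _, hr⟩ := hr
          rw [hr]; exact dist_nonneg
        · exact ⟨fα, fβ, hFa.symm, hFb.symm, rfl⟩
    _ < ε := hdist
end

section
/- If X is a path-connected compact metrizable space and d₁, d₂ are two metrics inducing the topology of X, then the identity map of πₙ(X,x₀) is a homeomorphism (indeed a topological group isomorphism) between the pseudometric topologies induced by d₁ and by d₂. -/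
open scoped Topology unitInterval

/-- The pseudometric on the n-th homotopy group induced by a distance function `D` on `X`:
ρ(a,b) = inf over representatives of the uniform (sup) distance. -/
noncomputable def homotopyRhoD {N X : Type*} [TopologicalSpace X] (D : X → X → ℝ) (x₀ : X)
    (a b : HomotopyGroup N X x₀) : ℝ :=
  sInf {r : ℝ | ∃ α β : GenLoop N X x₀,
    (⟦α⟧ : HomotopyGroup N X x₀) = a ∧ (⟦β⟧ : HomotopyGroup N X x₀) = b ∧
      r = ⨆ t : N → I, D (α.1 t) (β.1 t)}

/-- The topology induced by a pseudometric-like function: generated by its open balls. -/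
def pmTop {G : Type*} (ρ : G → G → ℝ) : TopologicalSpace G :=
  TopologicalSpace.generateFrom {s : Set G | ∃ (a : G) (r : ℝ), s = {b : G | ρ a b < r}}

section Aux

open Topology.Homotopy

variable {N X : Type*} [TopologicalSpace X] {x₀ : X}

/-- The uniform (sup) distance between two generalized loops, w.r.t. `D`. -/
noncomputable def muD (D : X → X → ℝ) (α β : GenLoop N X x₀) : ℝ :=
  ⨆ t : N → I, D (α.1 t) (β.1 t)

variable {D : X → X → ℝ} {C : ℝ}

lemma muD_bddAbove (hC : ∀ x y, D x y ≤ C) (α β : GenLoop N X x₀) :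
    BddAbove (Set.range fun t : N → I => D (α.1 t) (β.1 t)) := by
  refine ⟨C, ?_⟩
  rintro r ⟨u, rfl⟩
  exact hC _ _

lemma le_muD (hC : ∀ x y, D x y ≤ C) (α β : GenLoop N X x₀) (u : N → I) :
    D (α.1 u) (β.1 u) ≤ muD D α β :=
  le_ciSup (muD_bddAbove hC α β) u

lemma muD_nonneg (h0 : ∀ x y, 0 ≤ D x y) (hC : ∀ x y, D x y ≤ C) (α β : GenLoop N X x₀) :
    0 ≤ muD D α β :=
  le_trans (h0 _ _) (le_muD hC α β fun _ => 0)

lemma muD_self (hself : ∀ x, D x x = 0) (α : GenLoop N X x₀) : muD D α α = 0 := by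
  unfold muD
  simp only [hself]
  exact ciSup_const

lemma rho_bddBelow (h0 : ∀ x y, 0 ≤ D x y) (hC : ∀ x y, D x y ≤ C)
    {a b : HomotopyGroup N X x₀} :
    BddBelow {r : ℝ | ∃ α β : GenLoop N X x₀,
      (⟦α⟧ : HomotopyGroup N X x₀) = a ∧ (⟦β⟧ : HomotopyGroup N X x₀) = b ∧
        r = ⨆ t : N → I, D (α.1 t) (β.1 t)} := by
  refine ⟨0, ?_⟩
  rintro r ⟨α, β, -, -, rfl⟩
  exact muD_nonneg h0 hC α β

lemma rho_le (h0 : ∀ x y, 0 ≤ D x y) (hC : ∀ x y, D x y ≤ C)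
    {a b : HomotopyGroup N X x₀} {α β : GenLoop N X x₀}
    (ha : (⟦α⟧ : HomotopyGroup N X x₀) = a) (hb : (⟦β⟧ : HomotopyGroup N X x₀) = b) :
    homotopyRhoD D x₀ a b ≤ muD D α β :=
  csInf_le (rho_bddBelow h0 hC) ⟨α, β, ha, hb, rfl⟩

lemma rho_lt {a b : HomotopyGroup N X x₀} {r : ℝ}
    (h : homotopyRhoD D x₀ a b < r) :
    ∃ α β : GenLoop N X x₀, (⟦α⟧ : HomotopyGroup N X x₀) = a ∧
      (⟦β⟧ : HomotopyGroup N X x₀) = b ∧ muD D α β < r := by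
  obtain ⟨α₀, hα₀⟩ := Quotient.exists_rep a
  obtain ⟨β₀, hβ₀⟩ := Quotient.exists_rep b
  have hne : Set.Nonempty {r : ℝ | ∃ α β : GenLoop N X x₀,
      (⟦α⟧ : HomotopyGroup N X x₀) = a ∧ (⟦β⟧ : HomotopyGroup N X x₀) = b ∧
        r = ⨆ t : N → I, D (α.1 t) (β.1 t)} :=
    ⟨_, α₀, β₀, hα₀, hβ₀, rfl⟩
  obtain ⟨s, hs, hsr⟩ := exists_lt_of_csInf_lt hne h
  obtain ⟨α, β, ha, hb, rfl⟩ := hs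
  exact ⟨α, β, ha, hb, hsr⟩

lemma rho_self_le_zero (h0 : ∀ x y, 0 ≤ D x y) (hself : ∀ x, D x x = 0)
    (hC : ∀ x y, D x y ≤ C) (b : HomotopyGroup N X x₀) :
    homotopyRhoD D x₀ b b ≤ 0 := by
  obtain ⟨β, hβ⟩ := Quotient.exists_rep b
  calc homotopyRhoD D x₀ b b ≤ muD D β β := rho_le h0 hC hβ hβ
    _ = 0 := muD_self hself β

/-- The key "triangle-like" inequality via concatenation of loops: the distance from `a` to `c`
is controlled by distances of representatives measured through two (possibly different)
representatives of a middle class `b`. -/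
lemma rho_concat [DecidableEq N] [Nonempty N]
    (h0 : ∀ x y, 0 ≤ D x y) (hself : ∀ x, D x x = 0) (hC : ∀ x y, D x y ≤ C)
    {a b c : HomotopyGroup N X x₀} {α β β' γ : GenLoop N X x₀}
    (ha : (⟦α⟧ : HomotopyGroup N X x₀) = a) (hb : (⟦β⟧ : HomotopyGroup N X x₀) = b)
    (hb' : (⟦β'⟧ : HomotopyGroup N X x₀) = b) (hc : (⟦γ⟧ : HomotopyGroup N X x₀) = c) :
    homotopyRhoD D x₀ a c ≤ max (muD D α β) (muD D β' γ) := by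
  obtain ⟨i⟩ := ‹Nonempty N›
  set P : GenLoop N X x₀ := GenLoop.transAt i (GenLoop.transAt i α (GenLoop.symmAt i β)) β'
    with hPdef
  set Q : GenLoop N X x₀ := GenLoop.transAt i (GenLoop.transAt i β (GenLoop.symmAt i β)) γ
    with hQdef
  have hP : (⟦P⟧ : HomotopyGroup N X x₀) = a := by
    rw [hPdef, ← HomotopyGroup.mul_spec, ← HomotopyGroup.mul_spec, ← HomotopyGroup.inv_spec,
      ha, hb, hb']
    group
    rfl
  have hQ : (⟦Q⟧ : HomotopyGroup N X x₀) = c := by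
    rw [hQdef, ← HomotopyGroup.mul_spec, ← HomotopyGroup.mul_spec, ← HomotopyGroup.inv_spec,
      hb, hc]
    group
    rfl
  refine le_trans (rho_le h0 hC hP hQ) ?_
  refine ciSup_le fun u => ?_
  have hcoe : ∀ (f g : GenLoop N X x₀) (s : N → I),
      (GenLoop.transAt i f g).1 s =
        if (s i : ℝ) ≤ 1 / 2
          then f.1 (Function.update s i <| Set.projIcc 0 1 zero_le_one (2 * s i))
          else g.1 (Function.update s i <| Set.projIcc 0 1 zero_le_one (2 * s i - 1)) :=
    fun f g s => rfl
  rw [hPdef, hQdef]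
  simp only [hcoe]
  split_ifs with h1 h2
  · exact le_max_of_le_left (le_muD hC α β _)
  · rw [hself]
    exact le_max_of_le_left (muD_nonneg h0 hC α β)
  · exact le_max_of_le_right (le_muD hC β' γ _)

/-- One-sided comparison of the pseudometric topologies. -/
lemma pmTop_le_pmTop [DecidableEq N] [Nonempty N] {D₁ D₂ : X → X → ℝ} {C₁ C₂ : ℝ}
    (h01 : ∀ x y, 0 ≤ D₁ x y) (h02 : ∀ x y, 0 ≤ D₂ x y)
    (hs1 : ∀ x, D₁ x x = 0) (hs2 : ∀ x, D₂ x x = 0)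
    (hC1 : ∀ x y, D₁ x y ≤ C₁) (hC2 : ∀ x y, D₂ x y ≤ C₂)
    (hcomp : ∀ ε > (0 : ℝ), ∃ δ > (0 : ℝ), ∀ x y, D₁ x y < δ → D₂ x y ≤ ε) :
    pmTop (homotopyRhoD (N := N) D₁ x₀) ≤ pmTop (homotopyRhoD (N := N) D₂ x₀) := by
  rw [pmTop, pmTop, TopologicalSpace.le_generateFrom_iff_subset_isOpen]
  rintro s ⟨a, r, rfl⟩
  letI T : TopologicalSpace (HomotopyGroup N X x₀) :=
    TopologicalSpace.generateFrom {s | ∃ a r, s = {b | homotopyRhoD D₁ x₀ a b < r}}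
  have key : ∀ b, homotopyRhoD D₂ x₀ a b < r → ∃ δ > (0 : ℝ),
      {c | homotopyRhoD D₁ x₀ b c < δ} ⊆ {c | homotopyRhoD D₂ x₀ a c < r} := by
    intro b hb
    obtain ⟨α, β, ha, hbb, hμ⟩ := rho_lt hb
    have hεpos : 0 < (r - muD D₂ α β) / 2 := by
      have := hμ; linarith
    obtain ⟨δ, hδpos, hδ⟩ := hcomp _ hεpos
    refine ⟨δ, hδpos, ?_⟩
    intro c hc
    obtain ⟨β', γ, hb', hg, hμ1⟩ := rho_lt hc
    have hμ2 : muD D₂ β' γ ≤ (r - muD D₂ α β) / 2 :=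
      ciSup_le fun u => hδ _ _ (lt_of_le_of_lt (le_muD hC1 β' γ u) hμ1)
    have := rho_concat h02 hs2 hC2 ha hbb hb' hg
    have hαβ0 : 0 ≤ muD D₂ α β := muD_nonneg h02 hC2 α β
    have hmax : max (muD D₂ α β) (muD D₂ β' γ) < r := max_lt hμ (by linarith)
    exact lt_of_le_of_lt this hmax
  choose δ hδpos hδsub using key
  have hU : {b | homotopyRhoD D₂ x₀ a b < r} =
      ⋃ (b : HomotopyGroup N X x₀) (hb : homotopyRhoD D₂ x₀ a b < r),
        {c | homotopyRhoD D₁ x₀ b c < δ b hb} := by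
    ext c
    simp only [Set.mem_iUnion, Set.mem_setOf_eq]
    constructor
    · intro hcr
      exact ⟨c, hcr, lt_of_le_of_lt (rho_self_le_zero h01 hs1 hC1 c) (hδpos c hcr)⟩
    · rintro ⟨b, hb, hcb⟩
      exact hδsub b hb hcb
  show IsOpen[T] {b | homotopyRhoD D₂ x₀ a b < r}
  rw [hU]
  exact isOpen_iUnion fun b => isOpen_iUnion fun hb =>
    TopologicalSpace.GenerateOpen.basic _ ⟨b, δ b hb, rfl⟩

/-- Any two topologies on a subsingleton coincide. -/
lemma topologies_eq_of_subsingleton {G : Type*} [Subsingleton G]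
    (t₁ t₂ : TopologicalSpace G) : t₁ = t₂ := by
  refine TopologicalSpace.ext ?_
  funext s
  rcases s.eq_empty_or_nonempty with rfl | ⟨x, hx⟩
  · exact propext (iff_of_true (@isOpen_empty G t₁) (@isOpen_empty G t₂))
  · have hs : s = Set.univ := Set.eq_univ_iff_forall.mpr fun y => by
      rwa [Subsingleton.elim y x]
    rw [hs]
    exact propext (iff_of_true (@isOpen_univ G t₁) (@isOpen_univ G t₂))

end Aux

/-- If X is a path-connected compact metrizable space and d₁, d₂ are two metrics
inducing the topology of X, then the pseudometric topologies they induce on πₙ(X,x₀)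
coincide; i.e., the identity is a homeomorphism (indeed a topological group isomorphism). -/
theorem stmt9 {X : Type*} [t : TopologicalSpace X] [CompactSpace X] [PathConnectedSpace X]
    (x₀ : X) (n : ℕ) (m₁ m₂ : MetricSpace X)
    (h₁ : m₁.toUniformSpace.toTopologicalSpace = t)
    (h₂ : m₂.toUniformSpace.toTopologicalSpace = t) :
    pmTop (homotopyRhoD (N := Fin n) (fun a b => m₁.dist a b) x₀) =
      pmTop (homotopyRhoD (N := Fin n) (fun a b => m₂.dist a b) x₀) := by
  -- basic facts about the two distance functions
  have h01 : ∀ x y : X, 0 ≤ m₁.dist x y := fun x y => @dist_nonneg X m₁.toPseudoMetricSpace x y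
  have h02 : ∀ x y : X, 0 ≤ m₂.dist x y := fun x y => @dist_nonneg X m₂.toPseudoMetricSpace x y
  have hs1 : ∀ x : X, m₁.dist x x = 0 := fun x => @dist_self X m₁.toPseudoMetricSpace x
  have hs2 : ∀ x : X, m₂.dist x x = 0 := fun x => @dist_self X m₂.toPseudoMetricSpace x
  -- boundedness
  have hbdd : ∀ (m : MetricSpace X),
      m.toUniformSpace.toTopologicalSpace = t →
      ∃ C, ∀ x y : X, m.dist x y ≤ C := by
    intro m hm
    haveI hcs : @CompactSpace X m.toUniformSpace.toTopologicalSpace := by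
      rw [hm]; infer_instance
    have hcompact : @IsCompact X m.toUniformSpace.toTopologicalSpace Set.univ :=
      @isCompact_univ X m.toUniformSpace.toTopologicalSpace hcs
    have hbd := @IsCompact.isBounded X m.toPseudoMetricSpace Set.univ hcompact
    obtain ⟨C, hC⟩ := (@Metric.isBounded_iff X m.toPseudoMetricSpace Set.univ).mp hbd
    exact ⟨C, fun x y => hC (Set.mem_univ x) (Set.mem_univ y)⟩
  obtain ⟨C₁, hC1⟩ := hbdd m₁ h₁
  obtain ⟨C₂, hC2⟩ := hbdd m₂ h₂
  -- uniform continuity of the identity in both directions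
  have hcomp : ∀ (ma mb : MetricSpace X),
      ma.toUniformSpace.toTopologicalSpace = t →
      mb.toUniformSpace.toTopologicalSpace = t →
      ∀ ε > (0 : ℝ), ∃ δ > (0 : ℝ), ∀ x y : X, ma.dist x y < δ → mb.dist x y ≤ ε := by
    intro ma mb hma hmb ε hε
    haveI hcs : @CompactSpace X ma.toUniformSpace.toTopologicalSpace := by
      rw [hma]; infer_instance
    have hcont : Continuous[ma.toUniformSpace.toTopologicalSpace,
        mb.toUniformSpace.toTopologicalSpace] (id : X → X) := by
      rw [hma, hmb]
      exact continuous_id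
    have huc : @UniformContinuous X X ma.toUniformSpace mb.toUniformSpace id :=
      @CompactSpace.uniformContinuous_of_continuous X X ma.toUniformSpace mb.toUniformSpace
        hcs id hcont
    obtain ⟨δ, hδpos, hδ⟩ :=
      (@Metric.uniformContinuous_iff X X ma.toPseudoMetricSpace mb.toPseudoMetricSpace id).mp
        huc ε hε
    exact ⟨δ, hδpos, fun x y h => le_of_lt (hδ h)⟩
  -- case split on n
  rcases n with _ | n
  · -- n = 0 : the homotopy group is a subsingleton
    haveI hzs : Subsingleton (ZerothHomotopy X) :=
      (pathConnectedSpace_iff_zerothHomotopy.mp ‹PathConnectedSpace X›).2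
    haveI : Subsingleton (HomotopyGroup (Fin 0) X x₀) :=
      (HomotopyGroup.pi0EquivZerothHomotopy (X := X) (x := x₀)).subsingleton
    exact topologies_eq_of_subsingleton _ _
  · -- n + 1 : use the comparison lemma in both directions
    refine le_antisymm ?_ ?_
    · exact pmTop_le_pmTop (N := Fin (n + 1)) (x₀ := x₀)
        (D₁ := fun a b => m₁.dist a b) (D₂ := fun a b => m₂.dist a b)
        h01 h02 hs1 hs2 hC1 hC2 (hcomp m₁ m₂ h₁ h₂)
    · exact pmTop_le_pmTop (N := Fin (n + 1)) (x₀ := x₀)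
        (D₁ := fun a b => m₂.dist a b) (D₂ := fun a b => m₁.dist a b)
        h02 h01 hs2 hs1 hC2 hC1 (hcomp m₂ m₁ h₂ h₁)
end
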